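/- arXiv:1503.04989 — 2 statements merged into one kernel-verified Lean document; each statement's English description precedes it below -/
import Mathlib

section
/- Let K be a compact metric space and f : ℝ → ℝ be continuously differentiable with derivative f'. Then the Nemytskii (superposition) operator F : C(K,ℝ) → C(K,ℝ) defined by F(x)(ξ) = f(x(ξ)) is Fréchet differentiable at every x ∈ C(K,ℝ), and its Fréchet derivative acts as the multiplication operator [DF(x)·h](ξ) = f'(x(ξ))·h(ξ). -/
/-!
On the compact range of `x` the continuity of `f'` is uniform, so the mean value inequality bounds
the remainder `f (σ + t) - f σ - f' σ * t` by `ε * |t|` for `|t| < δ`, uniformly in `σ = x ξ`.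
Taking `t = h ξ` and the supremum over `ξ` gives the little-o estimate in the sup norm.
-/

open Metric

theorem IsCompact.exists_forall_dist_lt_of_continuousAt {α β : Type*} [PseudoMetricSpace α]
    [PseudoMetricSpace β] {s : Set α} (hs : IsCompact s) {f : α → β}
    (hf : ∀ x ∈ s, ContinuousAt f x) {ε : ℝ} (hε : 0 < ε) :
    ∃ δ > 0, ∀ x ∈ s, ∀ y, dist x y < δ → dist (f x) (f y) < ε := by
  obtain ⟨δ, hδ, hclose⟩ := mem_uniformity_dist.1 <|
    hs.uniformContinuousAt_of_continuousAt f hf (dist_mem_uniformity hε)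
  exact ⟨δ, hδ, fun x hx y hxy => hclose hxy hx⟩

theorem IsCompact.exists_forall_norm_sub_sub_fderiv_le {E F : Type*} [NormedAddCommGroup E]
    [NormedSpace ℝ E] [NormedAddCommGroup F] [NormedSpace ℝ F] {f : E → F} {f' : E → E →L[ℝ] F}
    {s : Set E} (hs : IsCompact s) (hf : ∀ x, HasFDerivAt f (f' x) x) (hf' : Continuous f')
    {ε : ℝ} (hε : 0 < ε) :
    ∃ δ > 0, ∀ x ∈ s, ∀ h, ‖h‖ < δ → ‖f (x + h) - f x - f' x h‖ ≤ ε * ‖h‖ := by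
  obtain ⟨δ, hδ, hclose⟩ :=
    hs.exists_forall_dist_lt_of_continuousAt (fun x _ => hf'.continuousAt) hε
  refine ⟨δ, hδ, fun x hx h hh => ?_⟩
  have hbound : ∀ y ∈ ball x δ, ‖f' y - f' x‖ ≤ ε := fun y hy => by
    rw [← dist_eq_norm, dist_comm]
    exact (hclose x hx y (mem_ball'.1 hy)).le
  have hmvt := (convex_ball x δ).norm_image_sub_le_of_norm_hasFDerivWithin_le'
    (fun y _ => (hf y).hasFDerivWithinAt) hbound (mem_ball_self hδ)
    (show x + h ∈ ball x δ by simpa [dist_eq_norm] using hh)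
  simpa using hmvt

theorem ContinuousMap.hasFDerivAt_comp_left {K : Type*} [TopologicalSpace K] [CompactSpace K]
    (f f' : C(ℝ, ℝ)) (hf : ∀ σ, HasDerivAt f (f' σ) σ) (x : C(K, ℝ)) :
    HasFDerivAt (fun y : C(K, ℝ) => f.comp y) (ContinuousLinearMap.mul ℝ C(K, ℝ) (f'.comp x))
      x := by
  rw [hasFDerivAt_iff_isLittleO_nhds_zero, Asymptotics.isLittleO_iff]
  intro ε hε
  obtain ⟨δ, hδ, hremainder⟩ := (isCompact_range x.continuous).exists_forall_norm_sub_sub_fderiv_le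
    (fun σ => (hf σ).hasFDerivAt)
    (ContinuousLinearMap.toSpanSingletonCLE.continuous.comp f'.continuous) hε
  filter_upwards [ball_mem_nhds 0 hδ] with h hh
  refine (ContinuousMap.norm_le _ (by positivity)).2 fun ξ => ?_
  have hhξ : ‖h ξ‖ ≤ ‖h‖ := h.norm_coe_le_norm ξ
  calc ‖(f.comp (x + h) - f.comp x - ContinuousLinearMap.mul ℝ C(K, ℝ) (f'.comp x) h) ξ‖
      = ‖f (x ξ + h ξ) - f (x ξ) - ContinuousLinearMap.toSpanSingleton ℝ (f' (x ξ)) (h ξ)‖ := by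
        simp [mul_comm]
    _ ≤ ε * ‖h ξ‖ := hremainder _ ⟨ξ, rfl⟩ _ (hhξ.trans_lt (mem_ball_zero_iff.1 hh))
    _ ≤ ε * ‖h‖ := by gcongr

/-- Fréchet differentiability of the Nemytskii operator on `C(K, ℝ)`. -/
theorem nemytskii_frechet_differentiable
    {K : Type*} [MetricSpace K] [CompactSpace K]
    (f f' : ℝ → ℝ)
    (hf : ∀ σ : ℝ, HasDerivAt f (f' σ) σ) (hf' : Continuous f')
    (F : C(K, ℝ) → C(K, ℝ))
    (hF : ∀ (x : C(K, ℝ)) (ξ : K), F x ξ = f (x ξ)) :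
    ∀ x : C(K, ℝ), ∃ D : C(K, ℝ) →L[ℝ] C(K, ℝ),
      HasFDerivAt F D x ∧ ∀ (h : C(K, ℝ)) (ξ : K), D h ξ = f' (x ξ) * h ξ := by
  intro x
  let fC : C(ℝ, ℝ) := ⟨f, continuous_iff_continuousAt.2 fun σ => (hf σ).continuousAt⟩
  let f'C : C(ℝ, ℝ) := ⟨f', hf'⟩
  have hFcomp : F = fun y => fC.comp y := funext fun y => ContinuousMap.ext (hF y)
  exact ⟨_, hFcomp ▸ fC.hasFDerivAt_comp_left f'C hf x, fun h ξ => rfl⟩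
end

section
/- Let K be a compact metric space and f : ℝ → ℝ be continuously differentiable with f'(σ) ≤ β for all σ ∈ ℝ and some β ∈ ℝ. Then the Nemytskii operator F(x)(ξ) = f(x(ξ)) satisfies: F − β·I is dissipative on C(K,ℝ), i.e. for all x, y ∈ C(K,ℝ) and all α ≥ 0, ‖x − y‖_∞ ≤ ‖x − y − α((F(x) − βx) − (F(y) − βy))‖_∞. -/
/-!
Put `g σ = f σ - β σ`; since `g' = f' - β ≤ 0`, `g` is antitone, so `a - b` and `g a - g b` have
opposite signs and subtracting `α (g a - g b)` from `a - b` can only increase its absolute value.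
Applied at each point of `K`, this bounds `|(x - y) ξ|` by the sup norm of the right-hand side.
-/

section OrderedRing

variable {R : Type*} [CommRing R] [LinearOrder R] [IsStrictOrderedRing R]

lemma abs_le_abs_add_of_mul_nonneg {a b : R} (h : 0 ≤ a * b) : |a| ≤ |a + b| := by
  rw [← sq_le_sq]
  nlinarith

lemma Antitone.abs_sub_le_abs_sub_sub_mul {g : R → R} (hg : Antitone g) (a b : R) {α : R}
    (hα : 0 ≤ α) :
    |a - b| ≤ |a - b - α * (g a - g b)| := by
  have hanti : (g a - g b) * (a - b) ≤ 0 := (antivary_id_iff.2 hg).sub_mul_sub_nonpos b a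
  rw [sub_eq_add_neg (a - b)]
  exact abs_le_abs_add_of_mul_nonneg (by nlinarith)

end OrderedRing

lemma antitone_sub_mul_of_hasDerivAt_le {f f' : ℝ → ℝ} {β : ℝ}
    (hf : ∀ σ, HasDerivAt f (f' σ) σ) (hβ : ∀ σ, f' σ ≤ β) :
    Antitone fun σ => f σ - β * σ :=
  antitone_of_hasDerivAt_nonpos (fun σ => (hf σ).sub ((hasDerivAt_id σ).const_mul β))
    fun σ => by simpa using hβ σ

lemma ContinuousMap.norm_le_norm_of_forall_norm_le {K E : Type*} [TopologicalSpace K]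
    [CompactSpace K] [SeminormedAddCommGroup E] {u v : C(K, E)} (h : ∀ ξ, ‖u ξ‖ ≤ ‖v ξ‖) :
    ‖u‖ ≤ ‖v‖ :=
  (u.norm_le (norm_nonneg v)).2 fun ξ => (h ξ).trans (v.norm_coe_le_norm ξ)

theorem nemytskii_shift_dissipative_general
    {K : Type*} [MetricSpace K] [CompactSpace K]
    (f f' : ℝ → ℝ) (β : ℝ)
    (hf : ∀ σ : ℝ, HasDerivAt f (f' σ) σ)
    (hβ : ∀ σ : ℝ, f' σ ≤ β)
    (F : C(K, ℝ) → C(K, ℝ))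
    (hF : ∀ (x : C(K, ℝ)) (ξ : K), F x ξ = f (x ξ)) :
    ∀ (x y : C(K, ℝ)) (α : ℝ), 0 ≤ α →
      ‖x - y‖ ≤ ‖x - y - α • ((F x - β • x) - (F y - β • y))‖ := by
  intro x y α hα
  have hg := antitone_sub_mul_of_hasDerivAt_le hf hβ
  refine ContinuousMap.norm_le_norm_of_forall_norm_le fun ξ => ?_
  simpa [hF] using hg.abs_sub_le_abs_sub_sub_mul (x ξ) (y ξ) hα

/-- If `f' ≤ β` then the Nemytskii operator minus `β • I` is dissipative on `C(K, ℝ)`. -/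
theorem nemytskii_shift_dissipative
    {K : Type*} [MetricSpace K] [CompactSpace K]
    (f f' : ℝ → ℝ) (β : ℝ)
    (hf : ∀ σ : ℝ, HasDerivAt f (f' σ) σ) (hf' : Continuous f')
    (hβ : ∀ σ : ℝ, f' σ ≤ β)
    (F : C(K, ℝ) → C(K, ℝ))
    (hF : ∀ (x : C(K, ℝ)) (ξ : K), F x ξ = f (x ξ)) :
    ∀ (x y : C(K, ℝ)) (α : ℝ), 0 ≤ α →
      ‖x - y‖ ≤ ‖x - y - α • ((F x - β • x) - (F y - β • y))‖ :=
  nemytskii_shift_dissipative_general f f' β hf hβ F hF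
end
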